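/- Golay's concatenation construction: if (a,b) is a GCP of length N and (c,d) is a GCP of length M, then, taking k = M, l = 1, m = MN in the general theorem, the polynomials F(z) = A(z^M)C(z) + B(z^M)D(z)z^{MN} and G(z) = A(z^M)D̃(z) − B(z^M)C̃(z)z^{MN} define a GCP of length 2MN; i.e., |F(z)|^2 + |G(z)|^2 is constant on the unit circle. -/

import Mathlib

open Complex Finset

/-- Polynomial A(z) = Σ_{i<N} a_i z^i of a length-N sequence. -/
noncomputable def poly (N : ℕ) (a : ℕ → ℂ) (z : ℂ) : ℂ :=
  ∑ i ∈ Finset.range N, a i * z ^ i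

/-- Aperiodic autocorrelation ρ_a(k) for k ≥ 0. -/
noncomputable def acorr (N : ℕ) (a : ℕ → ℂ) (k : ℕ) : ℂ :=
  ∑ i ∈ Finset.range (N - k), (starRingEnd ℂ) (a i) * a (i + k)

/-- (a,b) is a Golay complementary pair of length N. -/
def IsGCP (N : ℕ) (a b : ℕ → ℂ) : Prop :=
  ∀ k : ℕ, 0 < k → acorr N a k + acorr N b k = 0

lemma split_sum (N : ℕ) (f : ℕ → ℕ → ℂ) :
    ∑ i ∈ Finset.range N, ∑ j ∈ Finset.range N, f i j
      = (∑ k ∈ Finset.range N, ∑ j ∈ Finset.range (N - k), f (j + k) j)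
        + ∑ k ∈ Finset.range N, ∑ i ∈ Finset.range (N - (k + 1)), f i (i + k + 1) := by
  rw [← Finset.sum_product']
  rw [← Finset.sum_filter_add_sum_filter_not (Finset.range N ×ˢ Finset.range N)
      (fun p => p.2 ≤ p.1)]
  congr 1
  · rw [Finset.sum_sigma' (Finset.range N) (fun k => Finset.range (N - k))
      (fun k j => f (j + k) j)]
    apply Finset.sum_nbij' (i := fun p => (⟨p.1 - p.2, p.2⟩ : Σ _ : ℕ, ℕ))
      (j := fun s => (s.2 + s.1, s.2))
    · intro p hp
      simp only [Finset.mem_filter, Finset.mem_product, Finset.mem_range] at hp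
      simp only [Finset.mem_sigma, Finset.mem_range]
      omega
    · intro s hs
      simp only [Finset.mem_sigma, Finset.mem_range] at hs
      simp only [Finset.mem_filter, Finset.mem_product, Finset.mem_range]
      omega
    · intro p hp
      simp only [Finset.mem_filter, Finset.mem_product, Finset.mem_range] at hp
      simp only []
      congr 1 <;> omega
    · intro s hs
      simp
    · intro p hp
      simp only [Finset.mem_filter, Finset.mem_product, Finset.mem_range] at hp
      have : p.2 + (p.1 - p.2) = p.1 := by omega
      simp [this]
  · rw [Finset.sum_sigma' (Finset.range N) (fun k => Finset.range (N - (k + 1)))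
      (fun k i => f i (i + k + 1))]
    apply Finset.sum_nbij' (i := fun p => (⟨p.2 - p.1 - 1, p.1⟩ : Σ _ : ℕ, ℕ))
      (j := fun s => (s.2, s.2 + s.1 + 1))
    · intro p hp
      simp only [Finset.mem_filter, Finset.mem_product, Finset.mem_range, not_le] at hp
      simp only [Finset.mem_sigma, Finset.mem_range]
      omega
    · intro s hs
      simp only [Finset.mem_sigma, Finset.mem_range] at hs
      simp only [Finset.mem_filter, Finset.mem_product, Finset.mem_range, not_le]
      omega
    · intro p hp
      simp only [Finset.mem_filter, Finset.mem_product, Finset.mem_range, not_le] at hp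
      simp only []
      congr 1 <;> omega
    · intro s hs
      simp only [Finset.mem_sigma, Finset.mem_range] at hs
      simp only []
      congr 1 <;> omega
    · intro p hp
      simp only [Finset.mem_filter, Finset.mem_product, Finset.mem_range, not_le] at hp
      have : p.1 + (p.2 - p.1 - 1) + 1 = p.2 := by omega
      simp [this]

lemma unit_mul_conj {z : ℂ} (hz : ‖z‖ = 1) : z * (starRingEnd ℂ) z = 1 := by
  rw [Complex.mul_conj]
  norm_cast
  rw [Complex.normSq_eq_norm_sq, hz, one_pow]

lemma gcp_const (N : ℕ) (a b : ℕ → ℂ) (h : IsGCP N a b) (z : ℂ) (hz : ‖z‖ = 1) :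
    poly N a z * (starRingEnd ℂ) (poly N a z) + poly N b z * (starRingEnd ℂ) (poly N b z)
      = acorr N a 0 + acorr N b 0 := by
  have h1 : z * (starRingEnd ℂ) z = 1 := unit_mul_conj hz
  set w := (starRingEnd ℂ) z with hw
  have expand : ∀ u : ℕ → ℂ, poly N u z * (starRingEnd ℂ) (poly N u z)
      = ∑ i ∈ Finset.range N, ∑ j ∈ Finset.range N, (u i * (starRingEnd ℂ) (u j)) * (z ^ i * w ^ j) := by
    intro u
    rw [poly, map_sum, Finset.sum_mul_sum]
    refine Finset.sum_congr rfl fun i _ => Finset.sum_congr rfl fun j _ => ?_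
    simp only [map_mul, map_pow]
    ring
  rw [expand, expand, ← Finset.sum_add_distrib]
  simp_rw [← Finset.sum_add_distrib]
  have key : ∀ i j : ℕ,
      (a i * (starRingEnd ℂ) (a j)) * (z ^ i * w ^ j) + (b i * (starRingEnd ℂ) (b j)) * (z ^ i * w ^ j)
      = (a i * (starRingEnd ℂ) (a j) + b i * (starRingEnd ℂ) (b j)) * (z ^ i * w ^ j) := by
    intro i j; ring
  simp_rw [key]
  rw [split_sum N (fun i j => (a i * (starRingEnd ℂ) (a j) + b i * (starRingEnd ℂ) (b j)) * (z ^ i * w ^ j))]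
  have hsum : ∀ n : ℕ, z ^ n * w ^ n = 1 := by
    intro n; rw [← mul_pow, h1, one_pow]
  have lower : ∀ k, ∑ j ∈ Finset.range (N - k),
      (a (j + k) * (starRingEnd ℂ) (a j) + b (j + k) * (starRingEnd ℂ) (b j)) * (z ^ (j + k) * w ^ j)
      = z ^ k * (acorr N a k + acorr N b k) := by
    intro k
    rw [acorr, acorr, ← Finset.sum_add_distrib, Finset.mul_sum]
    refine Finset.sum_congr rfl fun j _ => ?_
    have : z ^ (j + k) * w ^ j = z ^ k * (z ^ j * w ^ j) := by rw [pow_add]; ring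
    rw [this, hsum j]
    ring
  have upper : ∀ k, ∑ i ∈ Finset.range (N - (k + 1)),
      (a i * (starRingEnd ℂ) (a (i + k + 1)) + b i * (starRingEnd ℂ) (b (i + k + 1))) * (z ^ i * w ^ (i + k + 1))
      = w ^ (k + 1) * (starRingEnd ℂ) (acorr N a (k + 1) + acorr N b (k + 1)) := by
    intro k
    rw [map_add, acorr, acorr, map_sum, map_sum, ← Finset.sum_add_distrib, Finset.mul_sum]
    refine Finset.sum_congr rfl fun i _ => ?_
    have : z ^ i * w ^ (i + k + 1) = w ^ (k + 1) * (z ^ i * w ^ i) := by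
      rw [show i + k + 1 = (k + 1) + i by omega, pow_add]; ring
    rw [this, hsum i]
    simp only [map_mul, conj_conj]
    have hik : i + (k + 1) = i + k + 1 := by omega
    rw [hik]
    ring
  simp_rw [lower, upper]
  have hz2 : ∀ k ∈ Finset.range N, k ≠ 0 → z ^ k * (acorr N a k + acorr N b k) = 0 := by
    intro k _ hk
    rw [h k (Nat.pos_of_ne_zero hk), mul_zero]
  rw [Finset.sum_eq_single 0 hz2]
  · have : ∀ k, (starRingEnd ℂ) (acorr N a (k + 1) + acorr N b (k + 1)) = 0 := by
      intro k; rw [h (k + 1) k.succ_pos, map_zero]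
    simp [this]
  · intro h0
    simp only [Finset.mem_range, not_lt, Nat.le_zero] at h0
    subst h0
    simp [acorr]

lemma poly_reflect (M : ℕ) (d : ℕ → ℂ) {z : ℂ} (hz : ‖z‖ = 1) :
    poly M (fun i => (starRingEnd ℂ) (d (M - 1 - i))) z
      = (starRingEnd ℂ) (poly M d z) * z ^ (M - 1) := by
  have h1 : z * (starRingEnd ℂ) z = 1 := unit_mul_conj hz
  have hsum : ∀ n : ℕ, z ^ n * (starRingEnd ℂ) z ^ n = 1 := by
    intro n; rw [← mul_pow, h1, one_pow]
  rw [poly, poly, map_sum, Finset.sum_mul]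
  rw [← Finset.sum_range_reflect (fun i => (starRingEnd ℂ) (d (M - 1 - i)) * z ^ i) M]
  refine Finset.sum_congr rfl fun i hi => ?_
  simp only [Finset.mem_range] at hi
  rw [show M - 1 - (M - 1 - i) = i by omega]
  simp only [map_mul, map_pow]
  rw [show (starRingEnd ℂ) (d i) * z ^ (M - 1 - i) = (starRingEnd ℂ) (d i) * z ^ (M-1-i) from rfl]
  have : z ^ (M - 1) = z ^ (M - 1 - i) * z ^ i := by
    rw [← pow_add, show M - 1 - i + i = M - 1 by omega]
  rw [this, show (starRingEnd ℂ) (d i) * (starRingEnd ℂ) z ^ i * (z ^ (M - 1 - i) * z ^ i)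
      = (starRingEnd ℂ) (d i) * z ^ (M - 1 - i) * (z ^ i * (starRingEnd ℂ) z ^ i) by ring,
    hsum i, mul_one]

theorem golay_concatenation (N M : ℕ) (a b c d : ℕ → ℂ)
    (hab : IsGCP N a b) (hcd : IsGCP M c d) :
    ∃ K : ℝ, ∀ z : ℂ, ‖z‖ = 1 →
      ‖poly N a (z ^ M) * poly M c z + poly N b (z ^ M) * poly M d z * z ^ (M * N)‖ ^ 2 +
        ‖poly N a (z ^ M) * poly M (fun i => (starRingEnd ℂ) (d (M - 1 - i))) z -
          poly N b (z ^ M) * poly M (fun i => (starRingEnd ℂ) (c (M - 1 - i))) z * z ^ (M * N)‖ ^ 2 = K := by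
  refine ⟨((acorr N a 0 + acorr N b 0) * (acorr M c 0 + acorr M d 0)).re, fun z hz => ?_⟩
  have hzM : ‖z ^ M‖ = 1 := by rw [norm_pow, hz, one_pow]
  have hA := gcp_const N a b hab (z ^ M) hzM
  have hC := gcp_const M c d hcd z hz
  have h1 : z * (starRingEnd ℂ) z = 1 := unit_mul_conj hz
  have hp : z ^ (M * N) * (starRingEnd ℂ) z ^ (M * N) = 1 := by
    rw [← mul_pow, h1, one_pow]
  have hq : z ^ (M - 1) * (starRingEnd ℂ) z ^ (M - 1) = 1 := by
    rw [← mul_pow, h1, one_pow]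
  rw [poly_reflect M d hz, poly_reflect M c hz]
  have hnorm : ∀ w : ℂ, ‖w‖ ^ 2 = (w * (starRingEnd ℂ) w).re := by
    intro w; rw [Complex.mul_conj]; norm_cast
    rw [Complex.normSq_eq_norm_sq]
  rw [hnorm, hnorm, ← Complex.add_re]
  congr 1
  rw [← hA, ← hC]
  set A := poly N a (z ^ M)
  set B := poly N b (z ^ M)
  set C := poly M c z
  set D := poly M d z
  simp only [map_add, map_mul, map_sub, map_pow, Complex.conj_conj]
  set cA := (starRingEnd ℂ) A
  set cB := (starRingEnd ℂ) B
  set cC := (starRingEnd ℂ) C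
  set cD := (starRingEnd ℂ) D
  set u := (starRingEnd ℂ) z
  linear_combination (B * D * cB * cD + B * cB * C * cC * (z ^ (M - 1) * u ^ (M - 1))) * hp +
    (A * cA * D * cD + B * cB * C * cC - A * C * cB * cD * u ^ (M * N)
      - B * D * cA * cC * z ^ (M * N)) * hq
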